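/- Every permutation-invariant continuous function h : [0,1]^M → ℝ admits a sum-decomposition: there exist continuous functions ρ̄ : ℝ^{M+1} → ℝ and φ̄ : ℝ → ℝ^{M+1} such that h(x₁,…,x_M) = ρ̄(Σ_{m=1}^M φ̄(x_m)) for all x ∈ [0,1]^M. -/

import Mathlib

/-!
The power sums `p_k(x) = ∑ m, x m ^ k` for `k ≤ M` determine the multiset of coordinates of `x`:
by Newton's identities they determine the elementary symmetric functions, i.e. the coefficients
of `∏ m, (X - x m)`, whose roots are the `x m`. Hence a permutation-invariant `h` is constant on
the fibres of the power-sum map `q`. On the compact cube `q` is a closed map, hence a quotient map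
onto its image, so `h` descends to a continuous function on `q '' cube`; Tietze extends it to
`ℝ^{M+1}`, and `q x = ∑ m, φ (x m)` with `φ z = (1, z, …, z^M)`.
-/

open Finset Polynomial

universe u

theorem Fintype.exists_perm_comp_eq_of_map_univ_eq {ι α : Type*} [Fintype ι] [DecidableEq α]
    {x y : ι → α} (hxy : univ.val.map x = univ.val.map y) : ∃ π : Equiv.Perm ι, x ∘ π = y := by
  have hfiber (a : α) : Fintype.card {i // y i = a} = Fintype.card {i // x i = a} := by
    simpa [Fintype.card_subtype, Finset.card_def, Finset.filter_val, Multiset.count_map,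
      eq_comm] using congrArg (Multiset.count a) hxy.symm
  exact ⟨Equiv.ofFiberEquiv fun a => Fintype.equivOfCardEq (hfiber a),
    funext (Equiv.ofFiberEquiv_map _)⟩

theorem Multiset.eq_of_esymm_eq {R : Type*} [CommRing R] [IsDomain R] {s t : Multiset R}
    (hcard : card s = card t) (he : ∀ k ≤ card s, s.esymm k = t.esymm k) : s = t := by
  have hprod : (s.map fun a => X - C a).prod = (t.map fun a => X - C a).prod := by
    ext k
    by_cases hk : k ≤ card s
    · rw [prod_X_sub_C_coeff s hk, prod_X_sub_C_coeff t (hcard ▸ hk), ← hcard,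
        he _ (Nat.sub_le _ _)]
    · rw [coeff_eq_zero_of_natDegree_lt, coeff_eq_zero_of_natDegree_lt] <;>
        rw [natDegree_multiset_prod_X_sub_C_eq_card] <;> omega
  simpa only [roots_multiset_prod_X_sub_C] using congrArg roots hprod

theorem natCast_mul_esymm_map_univ {σ R : Type*} [Fintype σ] [CommRing R] (x : σ → R) (k : ℕ) :
    k * (univ.val.map x).esymm k = (-1) ^ (k + 1) *
      ∑ a ∈ antidiagonal k with a.1 < k,
        (-1) ^ a.1 * (univ.val.map x).esymm a.1 * ∑ i, x i ^ a.2 := by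
  simpa only [map_mul, map_natCast, map_pow, map_neg, map_one, map_sum, MvPolynomial.psum,
    MvPolynomial.aeval_esymm_eq_multiset_esymm, MvPolynomial.aeval_X] using
    congrArg (MvPolynomial.aeval x) (MvPolynomial.mul_esymm_eq_sum σ R k)

theorem esymm_map_univ_eq_of_sum_pow_eq {σ R : Type*} [Fintype σ] [CommRing R] [IsDomain R]
    [CharZero R] {x y : σ → R} {n : ℕ} (hp : ∀ k ≤ n, ∑ i, x i ^ k = ∑ i, y i ^ k) :
    ∀ k ≤ n, (univ.val.map x).esymm k = (univ.val.map y).esymm k := by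
  intro k
  induction k using Nat.strong_induction_on with
  | _ k ih =>
    intro hkn
    rcases Nat.eq_zero_or_pos k with rfl | hk
    · simp [Multiset.esymm]
    refine mul_left_cancel₀ (Nat.cast_ne_zero.mpr hk.ne') ?_
    rw [natCast_mul_esymm_map_univ, natCast_mul_esymm_map_univ]
    congr 1
    refine sum_congr rfl fun a ha => ?_
    obtain ⟨hak, ha1⟩ := mem_filter.mp ha
    rw [HasAntidiagonal.mem_antidiagonal] at hak
    rw [ih a.1 ha1 (by omega), hp a.2 (by omega)]

def powerVector {R : Type*} [Monoid R] (n : ℕ) (z : R) : Fin (n + 1) → R := fun k => z ^ (k : ℕ)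

@[fun_prop]
theorem continuous_powerVector {R : Type*} [Monoid R] [TopologicalSpace R] [ContinuousMul R]
    (n : ℕ) :
    Continuous (powerVector (R := R) n) :=
  continuous_pi fun k => continuous_pow (k : ℕ)

theorem exists_perm_comp_eq_of_sum_powerVector_eq {ι R : Type*} [Fintype ι] [CommRing R]
    [IsDomain R] [CharZero R] {x y : ι → R}
    (hxy : ∑ i, powerVector (Fintype.card ι) (x i) = ∑ i, powerVector (Fintype.card ι) (y i)) :
    ∃ π : Equiv.Perm ι, x ∘ π = y := by
  classical
  have hpow (k : ℕ) (hk : k ≤ Fintype.card ι) : ∑ i, x i ^ k = ∑ i, y i ^ k := by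
    simpa [powerVector] using congrFun hxy ⟨k, by omega⟩
  refine Fintype.exists_perm_comp_eq_of_map_univ_eq (Multiset.eq_of_esymm_eq (by simp) ?_)
  simpa using esymm_map_univ_eq_of_sum_pow_eq hpow

theorem IsCompact.exists_continuousMap_comp_eqOn {X : Type*} {Y : Type u} {Z : Type*}
    [TopologicalSpace X] [TopologicalSpace Y] [NormalSpace Y] [T2Space Y] [TopologicalSpace Z]
    [TietzeExtension.{u} Z]
    {K : Set X} (hK : IsCompact K) {q : X → Y} (hq : ContinuousOn q K) {h : X → Z}
    (hh : ContinuousOn h K) (hfib : ∀ x ∈ K, ∀ y ∈ K, q x = q y → h x = h y) :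
    ∃ ρ : C(Y, Z), ∀ x ∈ K, h x = ρ (q x) := by
  have : CompactSpace K := isCompact_iff_compactSpace.mp hK
  let qK : C(K, q '' K) :=
    ⟨K.imageFactorization q, (continuousOn_iff_continuous_domRestrict.mp hq).subtype_mk _⟩
  have hquot : Topology.IsQuotientMap qK :=
    qK.continuous.isClosedMap.isQuotientMap qK.continuous Set.imageFactorization_surjective
  let g : C(K, Z) := ⟨K.domRestrict h, hh.domRestrict⟩
  have hg : Function.FactorsThrough g qK :=
    fun a b hab => hfib a a.2 b b.2 (Subtype.ext_iff.mp hab)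
  obtain ⟨ρ, hρ⟩ := (hquot.lift g hg).exists_restrict_eq (hK.image_of_continuousOn hq).isClosed
  refine ⟨ρ, fun x hx => ?_⟩
  calc h x = hquot.lift g hg (qK ⟨x, hx⟩) :=
        (DFunLike.congr_fun (hquot.lift_comp g hg) ⟨x, hx⟩).symm
    _ = ρ (q x) := by rw [← hρ]; rfl

theorem deepSets_representation_general (M : ℕ) (h : (Fin M → ℝ) → ℝ)
    (hcont : ContinuousOn h {x : Fin M → ℝ | ∀ m, x m ∈ Set.Icc (0 : ℝ) 1})
    (hinv : ∀ (π : Equiv.Perm (Fin M)) (x : Fin M → ℝ),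
      (∀ m, x m ∈ Set.Icc (0 : ℝ) 1) → h (x ∘ π) = h x) :
    ∃ (ρ : (Fin (M + 1) → ℝ) → ℝ) (φ : ℝ → (Fin (M + 1) → ℝ)),
      Continuous ρ ∧ Continuous φ ∧
        ∀ x : Fin M → ℝ, (∀ m, x m ∈ Set.Icc (0 : ℝ) 1) →
          h x = ρ (∑ m, φ (x m)) := by
  set cube := {x : Fin M → ℝ | ∀ m, x m ∈ Set.Icc (0 : ℝ) 1}
  have hcube : IsCompact cube := by
    simpa only [Set.pi, Set.mem_univ, true_imp_iff] using
      isCompact_univ_pi fun _ : Fin M => isCompact_Icc (a := (0 : ℝ)) (b := 1)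
  have hfib : ∀ x ∈ cube, ∀ y ∈ cube,
      ∑ m, powerVector M (x m) = ∑ m, powerVector M (y m) → h x = h y := by
    intro x hx y _ hxy
    obtain ⟨π, rfl⟩ := exists_perm_comp_eq_of_sum_powerVector_eq (x := x) (y := y)
      (by rwa [Fintype.card_fin])
    exact (hinv π x hx).symm
  obtain ⟨ρ, hρ⟩ := hcube.exists_continuousMap_comp_eqOn (by fun_prop) hcont hfib
  exact ⟨ρ, powerVector M, ρ.continuous, continuous_powerVector M, hρ⟩

/-- Deep sets representation theorem (homogeneous case): every permutation-invariant
continuous function `h : [0,1]^M → ℝ` can be written as `h x = ρ (∑ m, φ (x m))`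
with continuous `ρ : ℝ^{M+1} → ℝ` and `φ : ℝ → ℝ^{M+1}`. -/
theorem deepSets_representation (M : ℕ) (hM : 0 < M) (h : (Fin M → ℝ) → ℝ)
    (hcont : ContinuousOn h {x : Fin M → ℝ | ∀ m, x m ∈ Set.Icc (0 : ℝ) 1})
    (hinv : ∀ (π : Equiv.Perm (Fin M)) (x : Fin M → ℝ),
      (∀ m, x m ∈ Set.Icc (0 : ℝ) 1) → h (x ∘ π) = h x) :
    ∃ (ρ : (Fin (M + 1) → ℝ) → ℝ) (φ : ℝ → (Fin (M + 1) → ℝ)),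
      Continuous ρ ∧ Continuous φ ∧
        ∀ x : Fin M → ℝ, (∀ m, x m ∈ Set.Icc (0 : ℝ) 1) →
          h x = ρ (∑ m, φ (x m)) :=
  deepSets_representation_general M h hcont hinv
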